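/- Let D be a G-admissible divisor on H. Then for every G-admissible divisor D′ on H linearly equivalent to D, there exist an integer N and a sequence v₁, …, v_N of vertices of G such that D′ = M_{v_N}(⋯ (M_{v_1}(D)) ⋯), i.e., D′ is obtained from D by a finite sequence of G-admissible chip-firing moves. -/

import Mathlib

open Finset
open scoped Classical

structure Multigraph (V E : Type) where
  tail : E → V
  head : E → V
  loopless : ∀ e, tail e ≠ head e

namespace Multigraph

variable {V E : Type}

/-- The simple graph of adjacency underlying a multigraph. -/
def adjG (G : Multigraph V E) : SimpleGraph V :=
  SimpleGraph.fromRel (fun u v => ∃ e, G.tail e = u ∧ G.head e = v)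

/-- A multigraph is connected if its adjacency graph is. -/
def Conn (G : Multigraph V E) : Prop := G.adjG.Connected

end Multigraph

variable {V E : Type} [Fintype V] [Fintype E] [DecidableEq V] [DecidableEq E]

/-- The vertex set of the subdivision `H` of `G`: the vertices of `G` together with,
for each edge `e`, the `ℓ e − 1` interior vertices `x_1^e, …, x_{ℓ_e − 1}^e` of the
subdivision of `e` (the pair `⟨e, j⟩` encodes `x_{j+1}^e`, indexed along the reference
orientation of `e`). -/
abbrev VH (V E : Type) (ℓ : E → ℕ) := V ⊕ (Σ e : E, Fin (ℓ e - 1))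

/-- The vertex `x_j^e` of `H` (along the reference orientation of `e`),
for `0 ≤ j ≤ ℓ e`. -/
def xv (G : Multigraph V E) (ℓ : E → ℕ) (e : E) (j : ℕ) : VH V E ℓ :=
  if h : j = 0 then Sum.inl (G.tail e)
  else if h2 : j < ℓ e then Sum.inr ⟨e, ⟨j - 1, by omega⟩⟩
  else Sum.inl (G.head e)

/-- The principal divisor `div(F)` on `H` of a function `F : V(H) → ℤ`; its value at a
vertex `w` is `ord_w(F) = Σ (F(u) − F(w))`, the sum being over the edges of `H` between
`u` and `w`. The edges of `H` are the pairs `{x_j^e, x_{j+1}^e}` for `0 ≤ j < ℓ e`. -/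
def divH (G : Multigraph V E) (ℓ : E → ℕ) (F : VH V E ℓ → ℤ) (w : VH V E ℓ) : ℤ :=
  ∑ e : E, ∑ j ∈ Finset.range (ℓ e),
    ((if xv G ℓ e j = w then F (xv G ℓ e (j + 1)) - F (xv G ℓ e j) else 0) +
     (if xv G ℓ e (j + 1) = w then F (xv G ℓ e j) - F (xv G ℓ e (j + 1)) else 0))

/-- A divisor `D` on `H` is `G`-admissible if, for every edge `e` of `G`, `D` vanishes
at all interior vertices of the subdivision of `e`, except at most one where it
takes the value `1`. -/
def GAdm (G : Multigraph V E) (ℓ : E → ℕ) (D : VH V E ℓ → ℤ) : Prop :=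
  ∀ e : E,
    (∀ j : Fin (ℓ e - 1), D (Sum.inr ⟨e, j⟩) = 0) ∨
    (∃ j : Fin (ℓ e - 1), D (Sum.inr ⟨e, j⟩) = 1 ∧
      ∀ j' : Fin (ℓ e - 1), j' ≠ j → D (Sum.inr ⟨e, j'⟩) = 0)

/-- Membership in the cut `C_v(D)` of a `G`-admissible divisor `D` at a vertex `v` of
`G`: it contains `v` itself and, for each oriented edge `e` with tail `v`, the interior
vertices `x_i^e` with `1 ≤ i ≤ j_e(v)`, where `j_e(v)` is the position of the (unique)
interior vertex of `e` where `D` takes the value `1` (and `j_e(v) = 0` if there is none).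
(The pair `⟨e, j⟩` encodes the interior vertex at position `j+1` along the reference
orientation of `e`.) -/
def inCutAt (G : Multigraph V E) (ℓ : E → ℕ) (D : VH V E ℓ → ℤ) (v : V) :
    VH V E ℓ → Prop := fun w =>
  match w with
  | Sum.inl u => u = v
  | Sum.inr p =>
      (G.tail p.1 = v ∧ ∃ j : Fin (ℓ p.1 - 1), D (Sum.inr ⟨p.1, j⟩) = 1 ∧ p.2 ≤ j) ∨
      (G.head p.1 = v ∧ ∃ j : Fin (ℓ p.1 - 1), D (Sum.inr ⟨p.1, j⟩) = 1 ∧ j ≤ p.2)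

/-- The `G`-admissible chip-firing move of `D` at `v`:
`M_v(D) = D + div(χ_{C_v(D)})`. -/
noncomputable def Mv (G : Multigraph V E) (ℓ : E → ℕ) (D : VH V E ℓ → ℤ) (v : V) :
    VH V E ℓ → ℤ := fun w =>
  D w + divH G ℓ (fun w' => if inCutAt G ℓ D v w' then 1 else 0) w


/-!
Write `D' = D + div f` with `f ≥ 0` (shift `F` by a constant). Along a subdivided edge, `f` has
second differences `δ_{p'} − δ_p`, where `p` and `p'` are the chip positions of `D` and `D'`.
Hence `f` is bounded by its values at the two ends of the edge, so a nonzero `f` is positive at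
some vertex `v` of `G`; and if `f(v) > 0`, then `f > 0` on the whole cut `C_v(D)`. So
`f − χ_{C_v(D)} ≥ 0`, `D' = M_v(D) + div(f − χ_{C_v(D)})` with `M_v(D)` again `G`-admissible,
and induction on `∑ f` finishes the proof.
-/

theorem exists_lt_succ_of_lt {α : Type*} [LinearOrder α] {g : ℕ → α} {a b : ℕ} (hab : a ≤ b)
    (h : g a < g b) : ∃ t, a ≤ t ∧ t < b ∧ g t < g (t + 1) := by
  induction b, hab using Nat.le_induction with
  | base => exact absurd h (lt_irrefl _)
  | succ b hab ih =>
    by_cases hb : g a < g b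
    · obtain ⟨t, hat, htb, ht⟩ := ih hb
      exact ⟨t, hat, by omega, ht⟩
    · exact ⟨b, hab, by omega, (not_lt.1 hb).trans_lt h⟩

theorem exists_succ_lt_of_lt {α : Type*} [LinearOrder α] {g : ℕ → α} {a b : ℕ} (hab : a ≤ b)
    (h : g b < g a) : ∃ t, a ≤ t ∧ t < b ∧ g (t + 1) < g t :=
  exists_lt_succ_of_lt (α := αᵒᵈ) hab h

/-- On the path `0, 1, …, L`, the divisor of `g` at the interior vertices is `δ_{p'} − δ_p`.
Chip positions outside `1, …, L − 1` stand for "no chip". -/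
def SecondDiffEq (L p p' : ℕ) (g : ℕ → ℤ) : Prop :=
  ∀ t, 0 < t → t < L →
    g (t + 1) - 2 * g t + g (t - 1) = (if t = p' then 1 else 0) - (if t = p then 1 else 0)

namespace SecondDiffEq

variable {L p p' : ℕ} {g : ℕ → ℤ}

theorem reflect (h : SecondDiffEq L p p' g) :
    SecondDiffEq L (L - p) (L - p') (fun t => g (L - t)) := by
  intro t ht htL
  have := h (L - t) (by omega) (by omega)
  dsimp only
  rw [show L - (t + 1) = L - t - 1 by omega, show L - (t - 1) = L - t + 1 by omega]
  have e1 : (L - t = p') ↔ (t = L - p') := by omega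
  have e2 : (L - t = p) ↔ (t = L - p) := by omega
  simp only [e1, e2] at this
  linarith

theorem slope_sub (h : SecondDiffEq L p p' g) {a b : ℕ} (hab : a ≤ b) (hb : b < L) :
    (g (b + 1) - g b) - (g (a + 1) - g a) =
      (if p' ∈ Ioc a b then 1 else 0) - (if p ∈ Ioc a b then 1 else 0) := by
  induction b, hab using Nat.le_induction with
  | base => simp
  | succ b hab ih =>
    have hstep := h (b + 1) (by omega) hb
    rw [Nat.add_sub_cancel] at hstep
    have := ih (by omega)
    simp only [Finset.mem_Ioc] at this ⊢
    split_ifs at this hstep ⊢ <;> omega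

/-- Discrete maximum principle: a single chip cannot push `g` above its boundary values. -/
theorem nonpos (h : SecondDiffEq L p p' g) (h0 : g 0 ≤ 0) (hL : g L ≤ 0) :
    ∀ m ≤ L, g m ≤ 0 := by
  intro m hm
  by_contra! hpos
  obtain ⟨a, -, ham, hup⟩ := exists_lt_succ_of_lt (Nat.zero_le m) (h0.trans_lt hpos)
  obtain ⟨b, hmb, hbL, hdown⟩ := exists_succ_lt_of_lt hm (hL.trans_lt hpos)
  have hslope := h.slope_sub (a := a) (b := b) (by omega) hbL
  split_ifs at hslope <;> omega

/-- If `g ≥ 0` is positive at `0`, it stays positive up to the chip `p`: otherwise `g` would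
have to descend to `0` before `p`, and the chip at `p` bends it below `0` right after. -/
theorem pos_of_le (h : SecondDiffEq L p p' g) (hg : ∀ t ≤ L, 0 ≤ g t) (h0 : 0 < g 0)
    (hp : p < L) : ∀ t ≤ p, 0 < g t := by
  intro t htp
  by_contra! hgt
  obtain ⟨a, -, hat, hdown⟩ := exists_succ_lt_of_lt (Nat.zero_le t) (hgt.trans_lt h0)
  have hflat : ∀ u, a ≤ u → u < p → g (u + 1) ≤ g u := by
    intro u hau hup
    have := h.slope_sub hau (by omega)
    simp only [Finset.mem_Ioc] at this
    split_ifs at this <;> omega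
  have hgp : g p ≤ g t := by
    by_contra! hlt
    obtain ⟨u, htu, hup, hu⟩ := exists_lt_succ_of_lt htp hlt
    exact (hflat u (by omega) hup).not_gt hu
  have hslope := h.slope_sub (a := a) (b := p) (by omega) hp
  have hnext := hg (p + 1) hp
  simp only [Finset.mem_Ioc] at hslope
  split_ifs at hslope <;> omega

end SecondDiffEq

section Subdivision

variable (G : Multigraph V E) (ℓ : E → ℕ)

section

omit [Fintype V] [Fintype E] [DecidableEq V] [DecidableEq E]

theorem xv_zero (e : E) : xv G ℓ e 0 = Sum.inl (G.tail e) := by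
  simp [xv]

theorem xv_length (e : E) (h : 0 < ℓ e) : xv G ℓ e (ℓ e) = Sum.inl (G.head e) := by
  simp [xv, h.ne']

theorem xv_of_pos_of_lt (e : E) {t : ℕ} (h0 : 0 < t) (hL : t < ℓ e) :
    xv G ℓ e t = Sum.inr ⟨e, ⟨t - 1, by omega⟩⟩ := by
  simp [xv, h0.ne', hL]

theorem xv_succ (e : E) (i : Fin (ℓ e - 1)) : xv G ℓ e (i + 1) = Sum.inr ⟨e, i⟩ := by
  rw [xv_of_pos_of_lt G ℓ e (Nat.succ_pos i) (by omega)]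
  rfl

theorem xv_eq_inr_iff (e' e : E) (t : ℕ) (i : Fin (ℓ e - 1)) :
    xv G ℓ e' t = Sum.inr ⟨e, i⟩ ↔ e' = e ∧ t = i + 1 := by
  constructor
  · intro h
    unfold xv at h
    split_ifs at h with h0 hL
    simp only [Sum.inr.injEq, Sigma.mk.injEq] at h
    obtain ⟨rfl, hi⟩ := h
    refine ⟨rfl, ?_⟩
    have := congrArg Fin.val (eq_of_heq hi)
    simp only at this
    omega
  · rintro ⟨rfl, rfl⟩
    exact xv_succ G ℓ e' i

end

omit [Fintype V] in
theorem divH_xv (F : VH V E ℓ → ℤ) (e : E) {t : ℕ} (h0 : 0 < t) (hL : t < ℓ e) :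
    divH G ℓ F (xv G ℓ e t) =
      F (xv G ℓ e (t + 1)) - 2 * F (xv G ℓ e t) + F (xv G ℓ e (t - 1)) := by
  have ht : t - 1 + 1 = t := by omega
  have hpred : ∀ j, j + 1 = t ↔ j = t - 1 := by omega
  conv_lhs => rw [xv_of_pos_of_lt G ℓ e h0 hL]
  simp only [divH, xv_eq_inr_iff, ht, hpred, ite_and, Finset.sum_add_distrib]
  rw [Finset.sum_eq_single e (fun e' _ he' => by simp [he']) (by simp),
    Finset.sum_eq_single e (fun e' _ he' => by simp [he']) (by simp)]
  simp only [if_true, Finset.sum_ite_eq', Finset.mem_range, hL, ht, show t - 1 < ℓ e by omega]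
  ring

omit [Fintype V] in
theorem divH_sub (F F' : VH V E ℓ → ℤ) : divH G ℓ (F - F') = divH G ℓ F - divH G ℓ F' := by
  funext w
  simp only [divH, Pi.sub_apply, ← Finset.sum_sub_distrib]
  refine Finset.sum_congr rfl fun e _ => Finset.sum_congr rfl fun j _ => ?_
  split_ifs <;> ring

omit [Fintype V] in
theorem divH_const (c : ℤ) : divH G ℓ (fun _ => c) = 0 := by
  funext w
  simp [divH]

end Subdivision

/-- `D` restricted to the interior vertices `x_t^e` (`0 < t < ℓ e`) of the subdivided edge `e`
is `δ_p`; a position `p ∉ {1, …, ℓ e − 1}` means that `e` carries no chip. -/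
def IsChipPos (G : Multigraph V E) (ℓ : E → ℕ) (D : VH V E ℓ → ℤ) (e : E) (p : ℕ) : Prop :=
  ∀ t, 0 < t → t < ℓ e → D (xv G ℓ e t) = if t = p then 1 else 0

noncomputable def cutInd (G : Multigraph V E) (ℓ : E → ℕ) (D : VH V E ℓ → ℤ) (v : V) :
    VH V E ℓ → ℤ :=
  fun w => if inCutAt G ℓ D v w then 1 else 0

section Chips

omit [Fintype V] [Fintype E] [DecidableEq V] [DecidableEq E]

variable {G : Multigraph V E} {ℓ : E → ℕ} {D : VH V E ℓ → ℤ} {e : E} {p : ℕ} {v : V}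

theorem IsChipPos.apply_inr (hp : IsChipPos G ℓ D e p) (i : Fin (ℓ e - 1)) :
    D (Sum.inr ⟨e, i⟩) = if (i : ℕ) + 1 = p then 1 else 0 := by
  rw [← xv_succ, hp _ (Nat.succ_pos _) (by omega)]

theorem gAdm_iff : GAdm G ℓ D ↔ ∀ e, ∃ p, IsChipPos G ℓ D e p := by
  constructor
  · intro hD e
    rcases hD e with hzero | ⟨j, hj, hzero⟩
    · exact ⟨0, fun t h0 hL => by rw [xv_of_pos_of_lt G ℓ e h0 hL, hzero, if_neg h0.ne']⟩
    · refine ⟨j + 1, fun t h0 hL => ?_⟩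
      rw [xv_of_pos_of_lt G ℓ e h0 hL]
      split_ifs with htj
      · subst htj
        simpa using hj
      · exact hzero _ fun h => htj (by rw [← h]; simp; omega)
  · intro h e
    obtain ⟨p, hp⟩ := h e
    by_cases hpe : 0 < p ∧ p < ℓ e
    · refine Or.inr ⟨⟨p - 1, by omega⟩, by rw [hp.apply_inr]; simp; omega, fun j hj => ?_⟩
      rw [hp.apply_inr, if_neg]
      exact fun h => hj (Fin.ext (by simp; omega))
    · exact Or.inl fun i => by rw [hp.apply_inr, if_neg (by omega)]

theorem inCutAt_xv_iff (hp : IsChipPos G ℓ D e p) {t : ℕ} (h0 : 0 < t) (hL : t < ℓ e) :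
    inCutAt G ℓ D v (xv G ℓ e t) ↔
      0 < p ∧ p < ℓ e ∧ (G.tail e = v ∧ t ≤ p ∨ G.head e = v ∧ p ≤ t) := by
  rw [xv_of_pos_of_lt G ℓ e h0 hL]
  simp only [inCutAt, hp.apply_inr, Fin.le_iff_val_le_val]
  constructor
  · rintro (⟨hv, j, hj, hle⟩ | ⟨hv, j, hj, hle⟩) <;> have := j.isLt <;>
      split_ifs at hj <;> simp at hj hle
    · exact ⟨by omega, by omega, Or.inl ⟨hv, by omega⟩⟩
    · exact ⟨by omega, by omega, Or.inr ⟨hv, by omega⟩⟩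
  · rintro ⟨hp0, hpL, ⟨hv, htp⟩ | ⟨hv, hpt⟩⟩
    · exact Or.inl ⟨hv, ⟨p - 1, by omega⟩, by simp; omega, by simp; omega⟩
    · exact Or.inr ⟨hv, ⟨p - 1, by omega⟩, by simp; omega, by simp; omega⟩

end Chips

section Cut

variable {G : Multigraph V E} {ℓ : E → ℕ} {D : VH V E ℓ → ℤ} {e : E} {v : V}

omit [Fintype V] [Fintype E] [DecidableEq E]

theorem cutInd_inl (u : V) : cutInd G ℓ D v (Sum.inl u) = if u = v then 1 else 0 := by
  simp only [cutInd, inCutAt]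
  congr

theorem cutInd_xv_of_tail (hD : GAdm G ℓ D) (hv : G.tail e = v) (hℓ : 0 < ℓ e) :
    ∃ q < ℓ e, IsChipPos G ℓ D e q ∧
      ∀ s ≤ ℓ e, cutInd G ℓ D v (xv G ℓ e s) = if s ≤ q then 1 else 0 := by
  obtain ⟨p, hp⟩ := gAdm_iff.1 hD e
  have hh : G.head e ≠ v := fun h => G.loopless e (hv.trans h.symm)
  refine ⟨if 0 < p ∧ p < ℓ e then p else 0, by split_ifs <;> omega, fun t h0 hL => ?_,
    fun s hs => ?_⟩
  · rw [hp t h0 hL]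
    split_ifs <;> omega
  rcases Nat.eq_zero_or_pos s with rfl | hs0
  · simp [xv_zero, cutInd_inl, hv]
  rcases hs.lt_or_eq with hsL | rfl
  · simp only [cutInd, inCutAt_xv_iff hp hs0 hsL, hv, hh, true_and, false_and, or_false]
    split_ifs <;> omega
  · rw [xv_length G ℓ e hℓ, cutInd_inl, if_neg hh]
    split_ifs <;> omega

theorem cutInd_xv_of_head (hD : GAdm G ℓ D) (hv : G.head e = v) (hℓ : 0 < ℓ e) :
    ∃ q, 0 < q ∧ IsChipPos G ℓ D e q ∧
      ∀ s ≤ ℓ e, cutInd G ℓ D v (xv G ℓ e s) = if q ≤ s then 1 else 0 := by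
  obtain ⟨p, hp⟩ := gAdm_iff.1 hD e
  have ht : G.tail e ≠ v := fun h => G.loopless e (h.trans hv.symm)
  refine ⟨if 0 < p ∧ p < ℓ e then p else ℓ e, by split_ifs <;> omega, fun t h0 hL => ?_,
    fun s hs => ?_⟩
  · rw [hp t h0 hL]
    split_ifs <;> omega
  rcases Nat.eq_zero_or_pos s with rfl | hs0
  · rw [xv_zero, cutInd_inl, if_neg ht]
    split_ifs <;> omega
  rcases hs.lt_or_eq with hsL | rfl
  · simp only [cutInd, inCutAt_xv_iff hp hs0 hsL, hv, ht, true_and, false_and, false_or]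
    split_ifs <;> omega
  · rw [xv_length G ℓ e hℓ, cutInd_inl, if_pos hv]
    split_ifs <;> omega

omit [DecidableEq V] in
theorem cutInd_xv_of_ne (ht : G.tail e ≠ v) (hh : G.head e ≠ v) (s : ℕ) :
    cutInd G ℓ D v (xv G ℓ e s) = 0 := by
  unfold xv
  split_ifs <;> simp [cutInd, inCutAt, ht, hh]

end Cut

section Firing

variable {G : Multigraph V E} {ℓ : E → ℕ} {D : VH V E ℓ → ℤ} {e : E} {v : V}

omit [Fintype V]

theorem Mv_eq_add_divH_cutInd : Mv G ℓ D v = D + divH G ℓ (cutInd G ℓ D v) := rfl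

theorem Mv_xv {t : ℕ} (h0 : 0 < t) (hL : t < ℓ e) :
    Mv G ℓ D v (xv G ℓ e t) = D (xv G ℓ e t) + (cutInd G ℓ D v (xv G ℓ e (t + 1)) -
      2 * cutInd G ℓ D v (xv G ℓ e t) + cutInd G ℓ D v (xv G ℓ e (t - 1))) := by
  rw [Mv_eq_add_divH_cutInd, Pi.add_apply, divH_xv G ℓ _ e h0 hL]

/-- Firing `v` moves the chip of every edge at `v` one step away from `v`. -/
theorem gAdm_Mv (hD : GAdm G ℓ D) (v : V) : GAdm G ℓ (Mv G ℓ D v) := by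
  refine gAdm_iff.2 fun e => ?_
  by_cases hℓ : ℓ e ≤ 1
  · exact ⟨0, fun t h0 hL => by omega⟩
  by_cases ht : G.tail e = v
  · obtain ⟨q, -, hq, hχ⟩ := cutInd_xv_of_tail hD ht (by omega)
    refine ⟨q + 1, fun t h0 hL => ?_⟩
    rw [Mv_xv h0 hL, hq t h0 hL, hχ _ hL, hχ _ hL.le, hχ _ (by omega)]
    split_ifs <;> omega
  by_cases hh : G.head e = v
  · obtain ⟨q, -, hq, hχ⟩ := cutInd_xv_of_head hD hh (by omega)
    refine ⟨q - 1, fun t h0 hL => ?_⟩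
    rw [Mv_xv h0 hL, hq t h0 hL, hχ _ hL, hχ _ hL.le, hχ _ (by omega)]
    split_ifs <;> omega
  obtain ⟨p, hp⟩ := gAdm_iff.1 hD e
  refine ⟨p, fun t h0 hL => ?_⟩
  rw [Mv_xv h0 hL, hp t h0 hL, cutInd_xv_of_ne ht hh, cutInd_xv_of_ne ht hh,
    cutInd_xv_of_ne ht hh]
  ring

end Firing

section Reachability

variable {G : Multigraph V E} {ℓ : E → ℕ} {D f : VH V E ℓ → ℤ}

omit [Fintype V] in
theorem IsChipPos.secondDiffEq {e : E} {p p' : ℕ} (hp : IsChipPos G ℓ D e p)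
    (hp' : IsChipPos G ℓ (D + divH G ℓ f) e p') :
    SecondDiffEq (ℓ e) p p' (fun t => f (xv G ℓ e t)) := by
  intro t h0 hL
  have := hp' t h0 hL
  rw [Pi.add_apply, hp t h0 hL, divH_xv G ℓ f e h0 hL] at this
  linarith

/-- A nonzero `f ≥ 0` is positive at a vertex of `G`: along each edge, `f` is bounded by its
values at the two ends. -/
theorem exists_pos_of_ne_zero (hD : GAdm G ℓ D) (hD' : GAdm G ℓ (D + divH G ℓ f))
    (hf : 0 ≤ f) (hf0 : f ≠ 0) : ∃ v : V, 0 < f (Sum.inl v) := by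
  by_contra! hV
  refine hf0 (funext fun w => le_antisymm ?_ (hf w))
  rcases w with u | ⟨e, i⟩
  · exact hV u
  have hi := i.isLt
  obtain ⟨p, hp⟩ := gAdm_iff.1 hD e
  obtain ⟨p', hp'⟩ := gAdm_iff.1 hD' e
  rw [← xv_succ]
  refine (hp.secondDiffEq hp').nonpos ?_ ?_ _ (by omega)
  · simpa only [xv_zero] using hV _
  · simpa only [xv_length G ℓ e (by omega)] using hV _

omit [Fintype V] in
theorem cutInd_le (hD : GAdm G ℓ D) (hD' : GAdm G ℓ (D + divH G ℓ f)) (hf : 0 ≤ f)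
    {v : V} (hv : 0 < f (Sum.inl v)) : cutInd G ℓ D v ≤ f := by
  rintro (u | ⟨e, i⟩)
  · rw [cutInd_inl]
    split_ifs with huv
    · exact huv ▸ hv
    · exact hf _
  have hi := i.isLt
  obtain ⟨p', hp'⟩ := gAdm_iff.1 hD' e
  rw [← xv_succ]
  by_cases ht : G.tail e = v
  · obtain ⟨q, hqL, hq, hχ⟩ := cutInd_xv_of_tail hD ht (by omega)
    rw [hχ _ (by omega)]
    split_ifs with hiq
    · exact (hq.secondDiffEq hp').pos_of_le (fun t _ => hf _) (by rwa [xv_zero, ht]) hqL _ hiq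
    · exact hf _
  by_cases hh : G.head e = v
  · obtain ⟨q, hq0, hq, hχ⟩ := cutInd_xv_of_head hD hh (by omega)
    rw [hχ _ (by omega)]
    split_ifs with hqi
    · have := (hq.secondDiffEq hp').reflect.pos_of_le (fun t _ => hf _)
        (by rwa [Nat.sub_zero, xv_length G ℓ e (by omega), hh]) (by omega) (ℓ e - (i + 1))
        (by omega)
      rwa [Nat.sub_sub_self (by omega)] at this
    · exact hf _
  rw [cutInd_xv_of_ne ht hh]
  exact hf _

theorem exists_moves_of_nonneg (hD : GAdm G ℓ D) (hf : 0 ≤ f)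
    (hD' : GAdm G ℓ (D + divH G ℓ f)) :
    ∃ vs : List V, D + divH G ℓ f = vs.foldl (fun Dc v => Mv G ℓ Dc v) D := by
  obtain ⟨n, hn⟩ : ∃ n : ℕ, ∑ w, f w < n := ⟨(∑ w, f w).toNat + 1, by omega⟩
  induction n generalizing D f with
  | zero =>
    have := Finset.sum_nonneg fun w (_ : w ∈ Finset.univ) => hf w
    push_cast at hn
    omega
  | succ n ih =>
    by_cases hf0 : f = 0
    · refine ⟨[], ?_⟩
      rw [hf0, show divH G ℓ 0 = 0 from divH_const G ℓ 0, add_zero]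
      rfl
    obtain ⟨v, hv⟩ := exists_pos_of_ne_zero hD hD' hf hf0
    have hfire : Mv G ℓ D v + divH G ℓ (f - cutInd G ℓ D v) = D + divH G ℓ f := by
      rw [Mv_eq_add_divH_cutInd, divH_sub]
      abel
    have hcut : 1 ≤ ∑ w, cutInd G ℓ D v w := by
      have hv1 : cutInd G ℓ D v (Sum.inl v) = 1 := by simp [cutInd_inl]
      exact hv1 ▸ Finset.single_le_sum (fun w _ => by simp only [cutInd]; split_ifs <;> norm_num)
        (Finset.mem_univ _)
    obtain ⟨vs, hvs⟩ := ih (gAdm_Mv hD v) (sub_nonneg.2 (cutInd_le hD hD' hf hv))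
      (hfire ▸ hD') (by simp only [Pi.sub_apply, Finset.sum_sub_distrib]; push_cast at hn; omega)
    exact ⟨v :: vs, hfire ▸ hvs⟩

end Reachability

theorem stmt5_general (G : Multigraph V E) (ℓ : E → ℕ)
    (D : VH V E ℓ → ℤ) (hD : GAdm G ℓ D)
    (D' : VH V E ℓ → ℤ) (hD' : GAdm G ℓ D')
    (hequiv : ∃ F : VH V E ℓ → ℤ, ∀ w, D' w = D w + divH G ℓ F w) :
    ∃ vs : List V, D' = vs.foldl (fun Dc v => Mv G ℓ Dc v) D := by
  obtain ⟨F, hF⟩ := hequiv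
  obtain ⟨c, hc⟩ := (Set.finite_range F).bddBelow
  have hD'eq : D' = D + divH G ℓ (F - fun _ => c) := by
    rw [divH_sub, divH_const, sub_zero]
    exact funext hF
  subst hD'eq
  exact exists_moves_of_nonneg hD (fun w => sub_nonneg.2 (hc ⟨w, rfl⟩)) hD'

/-- if `D` and `D'` are `G`-admissible divisors on `H` that are linearly
equivalent, then `D'` is obtained from `D` by a finite sequence of `G`-admissible
chip-firing moves: `D' = M_{v_N}(⋯(M_{v_1}(D))⋯)` for some vertices `v₁, …, v_N`. -/
theorem stmt5 (G : Multigraph V E) (hG : G.Conn) (ℓ : E → ℕ) (hℓ : ∀ e, 0 < ℓ e)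
    (D : VH V E ℓ → ℤ) (hD : GAdm G ℓ D)
    (D' : VH V E ℓ → ℤ) (hD' : GAdm G ℓ D')
    (hequiv : ∃ F : VH V E ℓ → ℤ, ∀ w, D' w = D w + divH G ℓ F w) :
    ∃ vs : List V, D' = vs.foldl (fun Dc v => Mv G ℓ Dc v) D :=
  stmt5_general G ℓ D hD D' hD' hequiv
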